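/- There exists a quadtree (necessarily unbalanced) that admits no proper coloring with 3 colors under edge adjacency; hence four colors are sometimes necessary for unbalanced quadtrees under edge adjacency. -/
import Mathlib


/-- A dyadic square `[i/2^k, (i+1)/2^k] × [j/2^k, (j+1)/2^k] ⊆ [0,1]²`,
recorded by its level `k` and coordinates `i, j < 2^k`. -/
structure DyadicSquare where
  k : ℕ
  i : ℕ
  j : ℕ
  hi : i < 2 ^ k
  hj : j < 2 ^ k
deriving DecidableEq

namespace DyadicSquare

/-- The subset of the plane occupied by a dyadic square. -/
def region (s : DyadicSquare) : Set (ℝ × ℝ) :=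
  Set.Icc ((s.i : ℝ) / 2 ^ s.k) (((s.i : ℝ) + 1) / 2 ^ s.k) ×ˢ
    Set.Icc ((s.j : ℝ) / 2 ^ s.k) (((s.j : ℝ) + 1) / 2 ^ s.k)

/-- Two squares are edge-adjacent if they are distinct and their intersection
contains more than one point (a segment of positive length). -/
def EdgeAdj (s t : DyadicSquare) : Prop :=
  s ≠ t ∧ (s.region ∩ t.region).Nontrivial

/-- Two squares are corner-adjacent if they are distinct and their intersection
is nonempty (they share at least a corner point or part of an edge). -/
def CornerAdj (s t : DyadicSquare) : Prop :=
  s ≠ t ∧ (s.region ∩ t.region).Nonempty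

end DyadicSquare

/-- A finite set of dyadic squares has pairwise disjoint interiors. -/
def PairwiseDisjointInteriors (Q : Finset DyadicSquare) : Prop :=
  (Q : Set DyadicSquare).Pairwise fun s t =>
    interior s.region ∩ interior t.region = ∅

/-- A quadtree: a finite set of dyadic squares with pairwise disjoint interiors
whose union is the unit square `[0,1]²`. -/
def IsQuadtree (Q : Finset DyadicSquare) : Prop :=
  PairwiseDisjointInteriors Q ∧
    (⋃ s ∈ Q, s.region) = Set.Icc (0 : ℝ) 1 ×ˢ Set.Icc (0 : ℝ) 1

/-- A quadtree is balanced if any two edge-adjacent squares have side lengths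
(`2^{-k}`) within a factor of two of each other. -/
def IsBalanced (Q : Finset DyadicSquare) : Prop :=
  ∀ s ∈ Q, ∀ t ∈ Q, DyadicSquare.EdgeAdj s t → s.k ≤ t.k + 1 ∧ t.k ≤ s.k + 1

namespace QT4

open DyadicSquare

/-- The 13 leaves of the counterexample quadtree. -/
def sA : DyadicSquare := ⟨1,0,0, by decide, by decide⟩
def sB : DyadicSquare := ⟨1,0,1, by decide, by decide⟩
def sC : DyadicSquare := ⟨1,1,0, by decide, by decide⟩
def sD : DyadicSquare := ⟨2,2,3, by decide, by decide⟩
def sE : DyadicSquare := ⟨2,3,2, by decide, by decide⟩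
def sF : DyadicSquare := ⟨2,3,3, by decide, by decide⟩
def sG : DyadicSquare := ⟨3,4,4, by decide, by decide⟩
def sH : DyadicSquare := ⟨3,4,5, by decide, by decide⟩
def sI : DyadicSquare := ⟨3,5,5, by decide, by decide⟩
def sJ : DyadicSquare := ⟨4,10,8, by decide, by decide⟩
def sK : DyadicSquare := ⟨4,10,9, by decide, by decide⟩
def sL : DyadicSquare := ⟨4,11,8, by decide, by decide⟩
def sM : DyadicSquare := ⟨4,11,9, by decide, by decide⟩

/-- Internal nodes of the subdivision. -/
def n0 : DyadicSquare := ⟨0,0,0, by decide, by decide⟩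
def n1 : DyadicSquare := ⟨1,1,1, by decide, by decide⟩
def n2 : DyadicSquare := ⟨2,2,2, by decide, by decide⟩
def n3 : DyadicSquare := ⟨3,5,4, by decide, by decide⟩

def Q : Finset DyadicSquare := {sA, sB, sC, sD, sE, sF, sG, sH, sI, sJ, sK, sL, sM}

/-- Numeric sufficient condition for disjoint interiors. -/
def NSep (s t : DyadicSquare) : Prop :=
  (s.i+1)*2^t.k ≤ t.i*2^s.k ∨ (t.i+1)*2^s.k ≤ s.i*2^t.k ∨
  (s.j+1)*2^t.k ≤ t.j*2^s.k ∨ (t.j+1)*2^s.k ≤ s.j*2^t.k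

instance (s t : DyadicSquare) : Decidable (NSep s t) := by
  unfold NSep; infer_instance

lemma nsep_real {a b k l : ℕ} (h : (a+1)*2^l ≤ b*2^k) :
    ((a:ℝ)+1) / 2^k ≤ (b:ℝ) / 2^l := by
  rw [div_le_div_iff₀ (by positivity) (by positivity)]
  exact_mod_cast h

lemma Ioo_disj {a b c d : ℝ} (h : b ≤ c) : Set.Ioo a b ∩ Set.Ioo c d = ∅ := by
  ext x
  simp only [Set.mem_inter_iff, Set.mem_Ioo, Set.mem_empty_iff_false, iff_false, not_and]
  intro h1 h2 h3
  linarith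

lemma interior_disj_of_nsep (s t : DyadicSquare) (h : NSep s t) :
    interior s.region ∩ interior t.region = ∅ := by
  rw [region, region, interior_prod_eq, interior_prod_eq, interior_Icc, interior_Icc,
    interior_Icc, interior_Icc, Set.prod_inter_prod]
  rcases h with h | h | h | h
  · rw [Ioo_disj (nsep_real h)]; exact Set.empty_prod
  · rw [Set.inter_comm, Ioo_disj (nsep_real h)]; exact Set.empty_prod
  · rw [Ioo_disj (nsep_real h)]; exact Set.prod_empty
  · rw [Set.inter_comm (Set.Ioo ((s.j:ℝ)/2^s.k) _), Ioo_disj (nsep_real h)]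
    exact Set.prod_empty

lemma pairwise_Q : PairwiseDisjointInteriors Q := by
  have hd : ∀ s ∈ Q, ∀ t ∈ Q, s ≠ t → NSep s t := by decide
  intro s hs t ht hne
  exact interior_disj_of_nsep s t (hd s hs t ht hne)

/-- Splitting a dyadic square into its four children. -/
lemma split (k i j : ℕ) (hi : i < 2^k) (hj : j < 2^k) :
    region ⟨k,i,j,hi,hj⟩ =
      region ⟨k+1, 2*i, 2*j, by rw [pow_succ]; omega, by rw [pow_succ]; omega⟩ ∪
      region ⟨k+1, 2*i+1, 2*j, by rw [pow_succ]; omega, by rw [pow_succ]; omega⟩ ∪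
      region ⟨k+1, 2*i, 2*j+1, by rw [pow_succ]; omega, by rw [pow_succ]; omega⟩ ∪
      region ⟨k+1, 2*i+1, 2*j+1, by rw [pow_succ]; omega, by rw [pow_succ]; omega⟩ := by
  have hpos : (0:ℝ) < 2^(k+1) := by positivity
  have key : ∀ m : ℕ,
      Set.Icc ((m:ℝ)/2^k) (((m:ℝ)+1)/2^k) =
        Set.Icc ((2*(m:ℝ))/2^(k+1)) ((2*(m:ℝ)+1)/2^(k+1)) ∪
        Set.Icc ((2*(m:ℝ)+1)/2^(k+1)) ((2*(m:ℝ)+1+1)/2^(k+1)) := by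
    intro m
    have e1 : (m:ℝ)/2^k = (2*(m:ℝ))/2^(k+1) := by rw [pow_succ]; ring
    have e2 : ((m:ℝ)+1)/2^k = (2*(m:ℝ)+1+1)/2^(k+1) := by rw [pow_succ]; ring
    rw [e1, e2, Set.Icc_union_Icc_eq_Icc
      (by rw [div_le_div_iff₀ hpos hpos]; nlinarith [hpos])
      (by rw [div_le_div_iff₀ hpos hpos]; nlinarith [hpos])]
  simp only [region]
  push_cast
  rw [key i, key j, Set.union_prod, Set.prod_union, Set.prod_union]
  ext p
  simp only [Set.mem_union]
  tauto
  

lemma unit_eq_root : Set.Icc (0:ℝ) 1 ×ˢ Set.Icc (0:ℝ) 1 = n0.region := by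
  norm_num [n0, region]

lemma union_Q : (⋃ s ∈ Q, s.region) = Set.Icc (0:ℝ) 1 ×ˢ Set.Icc (0:ℝ) 1 := by
  have e1 : n0.region = sA.region ∪ sC.region ∪ sB.region ∪ n1.region :=
    split 0 0 0 (by decide) (by decide)
  have e2 : n1.region = n2.region ∪ sE.region ∪ sD.region ∪ sF.region :=
    split 1 1 1 (by decide) (by decide)
  have e3 : n2.region = sG.region ∪ n3.region ∪ sH.region ∪ sI.region :=
    split 2 2 2 (by decide) (by decide)
  have e4 : n3.region = sJ.region ∪ sL.region ∪ sK.region ∪ sM.region :=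
    split 3 5 4 (by decide) (by decide)
  rw [unit_eq_root, e1, e2, e3, e4]
  simp only [Q, Finset.set_biUnion_insert, Finset.set_biUnion_singleton]
  ext p
  simp only [Set.mem_union]
  tauto

lemma mk_adj (s t : DyadicSquare) (hne : s ≠ t) (p q : ℝ × ℝ)
    (hp : p ∈ s.region ∩ t.region) (hq : q ∈ s.region ∩ t.region) (hpq : p ≠ q) :
    EdgeAdj s t :=
  ⟨hne, p, hp, q, hq, hpq⟩

lemma adjCE : EdgeAdj sC sE :=
  mk_adj _ _ (by decide) ((3/4, 1/2) : ℝ × ℝ) ((1, 1/2) : ℝ × ℝ)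
    (by constructor <;> norm_num [sC, sE, region, Set.mem_prod])
    (by constructor <;> norm_num [sC, sE, region, Set.mem_prod])
    (by norm_num [Prod.ext_iff])

lemma adjCJ : EdgeAdj sC sJ :=
  mk_adj _ _ (by decide) ((5/8, 1/2) : ℝ × ℝ) ((11/16, 1/2) : ℝ × ℝ)
    (by constructor <;> norm_num [sC, sJ, region, Set.mem_prod])
    (by constructor <;> norm_num [sC, sJ, region, Set.mem_prod])
    (by norm_num [Prod.ext_iff])

lemma adjCL : EdgeAdj sC sL :=
  mk_adj _ _ (by decide) ((11/16, 1/2) : ℝ × ℝ) ((3/4, 1/2) : ℝ × ℝ)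
    (by constructor <;> norm_num [sC, sL, region, Set.mem_prod])
    (by constructor <;> norm_num [sC, sL, region, Set.mem_prod])
    (by norm_num [Prod.ext_iff])

lemma adjEI : EdgeAdj sE sI :=
  mk_adj _ _ (by decide) ((3/4, 5/8) : ℝ × ℝ) ((3/4, 3/4) : ℝ × ℝ)
    (by constructor <;> norm_num [sE, sI, region, Set.mem_prod])
    (by constructor <;> norm_num [sE, sI, region, Set.mem_prod])
    (by norm_num [Prod.ext_iff])

lemma adjEL : EdgeAdj sE sL :=
  mk_adj _ _ (by decide) ((3/4, 1/2) : ℝ × ℝ) ((3/4, 9/16) : ℝ × ℝ)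
    (by constructor <;> norm_num [sE, sL, region, Set.mem_prod])
    (by constructor <;> norm_num [sE, sL, region, Set.mem_prod])
    (by norm_num [Prod.ext_iff])

lemma adjEM : EdgeAdj sE sM :=
  mk_adj _ _ (by decide) ((3/4, 9/16) : ℝ × ℝ) ((3/4, 5/8) : ℝ × ℝ)
    (by constructor <;> norm_num [sE, sM, region, Set.mem_prod])
    (by constructor <;> norm_num [sE, sM, region, Set.mem_prod])
    (by norm_num [Prod.ext_iff])

lemma adjIK : EdgeAdj sI sK :=
  mk_adj _ _ (by decide) ((5/8, 5/8) : ℝ × ℝ) ((11/16, 5/8) : ℝ × ℝ)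
    (by constructor <;> norm_num [sI, sK, region, Set.mem_prod])
    (by constructor <;> norm_num [sI, sK, region, Set.mem_prod])
    (by norm_num [Prod.ext_iff])

lemma adjIM : EdgeAdj sI sM :=
  mk_adj _ _ (by decide) ((11/16, 5/8) : ℝ × ℝ) ((3/4, 5/8) : ℝ × ℝ)
    (by constructor <;> norm_num [sI, sM, region, Set.mem_prod])
    (by constructor <;> norm_num [sI, sM, region, Set.mem_prod])
    (by norm_num [Prod.ext_iff])

lemma adjJK : EdgeAdj sJ sK :=
  mk_adj _ _ (by decide) ((5/8, 9/16) : ℝ × ℝ) ((11/16, 9/16) : ℝ × ℝ)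
    (by constructor <;> norm_num [sJ, sK, region, Set.mem_prod])
    (by constructor <;> norm_num [sJ, sK, region, Set.mem_prod])
    (by norm_num [Prod.ext_iff])

lemma adjJL : EdgeAdj sJ sL :=
  mk_adj _ _ (by decide) ((11/16, 1/2) : ℝ × ℝ) ((11/16, 9/16) : ℝ × ℝ)
    (by constructor <;> norm_num [sJ, sL, region, Set.mem_prod])
    (by constructor <;> norm_num [sJ, sL, region, Set.mem_prod])
    (by norm_num [Prod.ext_iff])

lemma adjKM : EdgeAdj sK sM :=
  mk_adj _ _ (by decide) ((11/16, 9/16) : ℝ × ℝ) ((11/16, 5/8) : ℝ × ℝ)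
    (by constructor <;> norm_num [sK, sM, region, Set.mem_prod])
    (by constructor <;> norm_num [sK, sM, region, Set.mem_prod])
    (by norm_num [Prod.ext_iff])

end QT4

set_option synthInstance.maxSize 2000 in
set_option synthInstance.maxHeartbeats 1000000 in
set_option maxHeartbeats 2000000 in
/-- Some quadtree admits no proper 3-coloring under edge adjacency. -/
theorem quadtree_not_three_colorable :
    ∃ Q : Finset DyadicSquare, IsQuadtree Q ∧
      ¬ ∃ f : DyadicSquare → Fin 3,
          ∀ s ∈ Q, ∀ t ∈ Q, DyadicSquare.EdgeAdj s t → f s ≠ f t := by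
  refine ⟨QT4.Q, ⟨QT4.pairwise_Q, QT4.union_Q⟩, ?_⟩
  rintro ⟨f, hf⟩
  have h1 := hf _ (by decide) _ (by decide) QT4.adjCE
  have h2 := hf _ (by decide) _ (by decide) QT4.adjCJ
  have h3 := hf _ (by decide) _ (by decide) QT4.adjCL
  have h4 := hf _ (by decide) _ (by decide) QT4.adjEI
  have h5 := hf _ (by decide) _ (by decide) QT4.adjEL
  have h6 := hf _ (by decide) _ (by decide) QT4.adjEM
  have h7 := hf _ (by decide) _ (by decide) QT4.adjIK
  have h8 := hf _ (by decide) _ (by decide) QT4.adjIM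
  have h9 := hf _ (by decide) _ (by decide) QT4.adjJK
  have h10 := hf _ (by decide) _ (by decide) QT4.adjJL
  have h11 := hf _ (by decide) _ (by decide) QT4.adjKM
  revert h1 h2 h3 h4 h5 h6 h7 h8 h9 h10 h11
  generalize f QT4.sC = a
  generalize f QT4.sE = b
  generalize f QT4.sI = c
  generalize f QT4.sJ = d
  generalize f QT4.sK = e
  generalize f QT4.sL = g
  generalize f QT4.sM = h
  revert a b c d e g h
  decide
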